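/- arXiv:1708.08098 — 2 statements merged into one kernel-verified Lean document; each statement's English description precedes it below -/
import Mathlib

section
/- Assume β = 0 and that all unit production costs are equal: c_t = c > 0 for every t. Fix 1 ≤ t1 ≤ t2 ≤ T. Let 𝔅1 be the maximum of B_{t1−1} over feasible plans on periods 1..t1−1 with ending inventory I_{t1−1} = 0 (taking 𝔅1 = B_0 when t1 = 1), and assume this maximum is attained. Then the supremum of B_{t2} over all feasible plans on periods 1..t2 satisfying I_{t1−1} = 0 and I_{t2} = 0 equals 𝔅1 + D, where D is the supremum of B_{t2} − 𝔅1 over feasible plans on periods t1..t2 with initial inventory 0, initial capital 𝔅1, and ending inventory I_{t2} = 0. -/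
noncomputable def setupInd (x : ℝ) : ℝ := if 0 < x then 1 else 0

noncomputable def wSeq (d : ℕ → ℝ) (β : ℝ) (v : ℕ → ℝ) : ℕ → ℝ
  | 0 => 0
  | t + 1 => max 0 (d (t + 1) - β * wSeq d β v t) - v (t + 1)

noncomputable def EdSeq (d : ℕ → ℝ) (β : ℝ) (v : ℕ → ℝ) (t : ℕ) : ℝ :=
  max 0 (d t - β * wSeq d β v (t - 1))

noncomputable def ISeq (y v : ℕ → ℝ) (m t : ℕ) : ℝ :=
  ∑ j ∈ Finset.Icc m t, (y j - v j)

noncomputable def BSeq (p h s c : ℕ → ℝ) (R : ℝ) (TL : ℕ) (y v : ℕ → ℝ)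
    (m : ℕ) (Binit : ℝ) : ℕ → ℝ
  | 0 => Binit
  | t + 1 =>
    if t + 1 < m then Binit
    else
      BSeq p h s c R TL y v m Binit t + p (t + 1) * v (t + 1)
        - h (t + 1) * ISeq y v m (t + 1)
        - s (t + 1) * setupInd (y (t + 1))
        - c (t + 1) * y (t + 1)
        - (if t + 1 = TL then R else 0)

/-- Feasibility of a full-horizon plan (periods 1..T). -/
def Feasible (T : ℕ) (d p c h s : ℕ → ℝ) (β B0 R : ℝ) (TL : ℕ)
    (y v : ℕ → ℝ) : Prop :=
  ∀ t, 1 ≤ t → t ≤ T →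
    0 ≤ y t ∧ 0 ≤ v t ∧ v t ≤ EdSeq d β v t ∧
    0 ≤ ISeq y v 1 t ∧
    s t * setupInd (y t) + c t * y t ≤ BSeq p h s c R TL y v 1 B0 (t - 1) ∧
    0 ≤ BSeq p h s c R TL y v 1 B0 t

/-- Feasibility of a plan on periods m..n, β = 0 case (sales bounded by demand),
with initial inventory 0 and initial capital `Binit`. -/
def FeasibleSeg (m n : ℕ) (d p c h s : ℕ → ℝ) (R : ℝ) (TL : ℕ) (Binit : ℝ)
    (y v : ℕ → ℝ) : Prop :=
  ∀ t, m ≤ t → t ≤ n →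
    0 ≤ y t ∧ 0 ≤ v t ∧ v t ≤ d t ∧
    0 ≤ ISeq y v m t ∧
    s t * setupInd (y t) + c t * y t ≤ BSeq p h s c R TL y v m Binit (t - 1) ∧
    0 ≤ BSeq p h s c R TL y v m Binit t

section Aux

lemma BSeq_add (p h s c : ℕ → ℝ) (R : ℝ) (TL : ℕ) (y v : ℕ → ℝ) (m : ℕ) (B B' : ℝ) :
    ∀ t, BSeq p h s c R TL y v m B' t = BSeq p h s c R TL y v m B t + (B' - B)
  | 0 => by simp [BSeq]
  | t + 1 => by
    simp only [BSeq]
    split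
    · ring
    · rw [BSeq_add p h s c R TL y v m B B' t]; ring

lemma ISeq_congr (y v y' v' : ℕ → ℝ) (m t : ℕ)
    (hy : ∀ j, m ≤ j → j ≤ t → y j = y' j) (hv : ∀ j, m ≤ j → j ≤ t → v j = v' j) :
    ISeq y v m t = ISeq y' v' m t := by
  unfold ISeq
  refine Finset.sum_congr rfl fun j hj => ?_
  rw [Finset.mem_Icc] at hj
  rw [hy j hj.1 hj.2, hv j hj.1 hj.2]

lemma BSeq_congr (p h s c : ℕ → ℝ) (R : ℝ) (TL : ℕ) (y v y' v' : ℕ → ℝ) (m : ℕ) (B : ℝ) :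
    ∀ t, (∀ j, m ≤ j → j ≤ t → y j = y' j) → (∀ j, m ≤ j → j ≤ t → v j = v' j) →
    BSeq p h s c R TL y v m B t = BSeq p h s c R TL y' v' m B t
  | 0, _, _ => by simp [BSeq]
  | t + 1, hy, hv => by
    simp only [BSeq]
    split
    · rfl
    · rename_i hm
      push_neg at hm
      rw [BSeq_congr p h s c R TL y v y' v' m B t
            (fun j a b => hy j a (by omega)) (fun j a b => hv j a (by omega)),
        ISeq_congr y v y' v' m (t + 1) hy hv, hy (t + 1) hm le_rfl, hv (t + 1) hm le_rfl]

lemma ISeq_split (y v : ℕ → ℝ) (k t : ℕ) (hk : 1 ≤ k) (ht : k - 1 ≤ t) :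
    ISeq y v 1 t = ISeq y v 1 (k - 1) + ISeq y v k t := by
  unfold ISeq
  have h1 : Finset.Icc 1 t = Finset.Ioc 0 t := Finset.Icc_add_one_left_eq_Ioc 0 t
  have h2 : Finset.Icc 1 (k - 1) = Finset.Ioc 0 (k - 1) := Finset.Icc_add_one_left_eq_Ioc 0 (k - 1)
  have h3 : Finset.Icc k t = Finset.Ioc (k - 1) t := by
    rw [← Finset.Icc_add_one_left_eq_Ioc]; congr 1; omega
  rw [h1, h2, h3, Finset.sum_Ioc_consecutive _ (Nat.zero_le _) ht]

lemma BSeq_shift (p h s c : ℕ → ℝ) (R : ℝ) (TL : ℕ) (y v : ℕ → ℝ) (k : ℕ) (hk : 1 ≤ k)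
    (B0 : ℝ) (hI : ISeq y v 1 (k - 1) = 0) :
    ∀ t, k - 1 ≤ t →
      BSeq p h s c R TL y v k (BSeq p h s c R TL y v 1 B0 (k - 1)) t
        = BSeq p h s c R TL y v 1 B0 t := by
  intro t
  induction t with
  | zero =>
    intro ht
    have hk1 : k = 1 := by omega
    subst hk1
    simp [BSeq]
  | succ t ih =>
    intro ht
    by_cases hm : t + 1 < k
    · have hk1 : t + 1 = k - 1 := by omega
      have hL : BSeq p h s c R TL y v k (BSeq p h s c R TL y v 1 B0 (k - 1)) (t + 1)
          = BSeq p h s c R TL y v 1 B0 (k - 1) := by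
        show (if t + 1 < k then _ else _) = _
        rw [if_pos hm]
      rw [hL, ← hk1]
    · have hkt : k - 1 ≤ t := by omega
      have hIe : ISeq y v k (t + 1) = ISeq y v 1 (t + 1) := by
        rw [ISeq_split y v k (t + 1) hk (by omega), hI, zero_add]
      simp only [BSeq]
      rw [if_neg hm, if_neg (by omega : ¬ t + 1 < 1), ih hkt, hIe]

lemma FeasibleSeg_mono (m n : ℕ) (d p c h s : ℕ → ℝ) (R : ℝ) (TL : ℕ) {B B' : ℝ}
    (hBB : B ≤ B') {y v : ℕ → ℝ} (hf : FeasibleSeg m n d p c h s R TL B y v) :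
    FeasibleSeg m n d p c h s R TL B' y v := by
  intro t hm hn
  obtain ⟨h1, h2, h3, h4, h5, h6⟩ := hf t hm hn
  refine ⟨h1, h2, h3, h4, ?_, ?_⟩
  · rw [BSeq_add p h s c R TL y v m B B']; linarith
  · rw [BSeq_add p h s c R TL y v m B B']; linarith

lemma FeasibleSeg_congr (m n : ℕ) (d p c h s : ℕ → ℝ) (R : ℝ) (TL : ℕ) (B : ℝ)
    {y v y' v' : ℕ → ℝ}
    (hy : ∀ j, m ≤ j → j ≤ n → y j = y' j) (hv : ∀ j, m ≤ j → j ≤ n → v j = v' j)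
    (hf : FeasibleSeg m n d p c h s R TL B y v) :
    FeasibleSeg m n d p c h s R TL B y' v' := by
  intro t hm hn
  obtain ⟨h1, h2, h3, h4, h5, h6⟩ := hf t hm hn
  have hyt := hy t hm hn
  have hvt := hv t hm hn
  have hI : ISeq y v m t = ISeq y' v' m t :=
    ISeq_congr _ _ _ _ _ _ (fun j a b => hy j a (b.trans hn)) (fun j a b => hv j a (b.trans hn))
  have hB1 : BSeq p h s c R TL y v m B (t - 1) = BSeq p h s c R TL y' v' m B (t - 1) :=
    BSeq_congr p h s c R TL y v y' v' m B (t - 1) (fun j a b => hy j a (by omega))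
      (fun j a b => hv j a (by omega))
  have hB2 : BSeq p h s c R TL y v m B t = BSeq p h s c R TL y' v' m B t :=
    BSeq_congr p h s c R TL y v y' v' m B t (fun j a b => hy j a (b.trans hn))
      (fun j a b => hv j a (b.trans hn))
  exact ⟨hyt ▸ h1, hvt ▸ h2, hvt ▸ h3, hI ▸ h4, by rw [← hyt, ← hB1]; exact h5, hB2 ▸ h6⟩

end Aux

lemma concatPlan (d p c h s : ℕ → ℝ) (R : ℝ) (TL : ℕ) (B0 b1 : ℝ)
    (t1 t2 : ℕ) (ht1 : 1 ≤ t1) (ht12 : t1 ≤ t2)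
    (y1 v1 : ℕ → ℝ) (hf1 : FeasibleSeg 1 (t1 - 1) d p c h s R TL B0 y1 v1)
    (hI1 : ISeq y1 v1 1 (t1 - 1) = 0) (hB1 : BSeq p h s c R TL y1 v1 1 B0 (t1 - 1) = b1)
    (y2 v2 : ℕ → ℝ) (hf2 : FeasibleSeg t1 t2 d p c h s R TL b1 y2 v2)
    (hI2 : ISeq y2 v2 t1 t2 = 0) :
    ∃ y v : ℕ → ℝ, FeasibleSeg 1 t2 d p c h s R TL B0 y v ∧
      ISeq y v 1 (t1 - 1) = 0 ∧ ISeq y v 1 t2 = 0 ∧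
      BSeq p h s c R TL y v 1 B0 t2 = BSeq p h s c R TL y2 v2 t1 b1 t2 := by
  classical
  refine ⟨fun t => if t < t1 then y1 t else y2 t, fun t => if t < t1 then v1 t else v2 t,
    ?_, ?_, ?_, ?_⟩ <;>
  · set Y : ℕ → ℝ := fun t => if t < t1 then y1 t else y2 t with hYdef
    set V : ℕ → ℝ := fun t => if t < t1 then v1 t else v2 t with hVdef
    have hYa : ∀ j, j ≤ t1 - 1 → Y j = y1 j := by
      intro j hj; rw [hYdef]; exact if_pos (by omega)
    have hVa : ∀ j, j ≤ t1 - 1 → V j = v1 j := by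
      intro j hj; rw [hVdef]; exact if_pos (by omega)
    have hYb : ∀ j, t1 ≤ j → Y j = y2 j := by
      intro j hj; rw [hYdef]; exact if_neg (by omega)
    have hVb : ∀ j, t1 ≤ j → V j = v2 j := by
      intro j hj; rw [hVdef]; exact if_neg (by omega)
    have hIY0 : ISeq Y V 1 (t1 - 1) = 0 := by
      rw [ISeq_congr Y V y1 v1 1 (t1 - 1) (fun j _ b => hYa j b) (fun j _ b => hVa j b)]
      exact hI1
    have hBpre : ∀ t, t ≤ t1 - 1 → BSeq p h s c R TL Y V 1 B0 t = BSeq p h s c R TL y1 v1 1 B0 t := by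
      intro t ht
      exact BSeq_congr p h s c R TL Y V y1 v1 1 B0 t (fun j _ b => hYa j (by omega))
        (fun j _ b => hVa j (by omega))
    have hB1' : BSeq p h s c R TL Y V 1 B0 (t1 - 1) = b1 := by
      rw [hBpre (t1 - 1) le_rfl]; exact hB1
    have hBseg : ∀ t, BSeq p h s c R TL Y V t1 b1 t = BSeq p h s c R TL y2 v2 t1 b1 t := by
      intro t
      exact BSeq_congr p h s c R TL Y V y2 v2 t1 b1 t (fun j a _ => hYb j a)
        (fun j a _ => hVb j a)
    have hshift : ∀ t, t1 - 1 ≤ t → BSeq p h s c R TL Y V t1 b1 t = BSeq p h s c R TL Y V 1 B0 t := by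
      intro t ht
      rw [← hB1']
      exact BSeq_shift p h s c R TL Y V t1 ht1 B0 hIY0 t ht
    have hIsegc : ∀ t, ISeq Y V t1 t = ISeq y2 v2 t1 t := by
      intro t
      exact ISeq_congr Y V y2 v2 t1 t (fun j a _ => hYb j a) (fun j a _ => hVb j a)
    have hIfull : ∀ t, t1 - 1 ≤ t → ISeq Y V 1 t = ISeq y2 v2 t1 t := by
      intro t ht
      rw [ISeq_split Y V t1 t ht1 ht, hIY0, zero_add, hIsegc]
    first
    | -- feasibility
      (intro t h1t ht2'
       by_cases hcase : t ≤ t1 - 1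
       · obtain ⟨a1, a2, a3, a4, a5, a6⟩ := hf1 t h1t hcase
         refine ⟨?_, ?_, ?_, ?_, ?_, ?_⟩
         · rw [hYa t hcase]; exact a1
         · rw [hVa t hcase]; exact a2
         · rw [hVa t hcase]; exact a3
         · rw [ISeq_congr Y V y1 v1 1 t (fun j _ b => hYa j (by omega))
             (fun j _ b => hVa j (by omega))]; exact a4
         · rw [hYa t hcase, hBpre (t - 1) (by omega)]; exact a5
         · rw [hBpre t hcase]; exact a6
       · have h1t' : t1 ≤ t := by omega
         obtain ⟨a1, a2, a3, a4, a5, a6⟩ := hf2 t h1t' ht2'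
         refine ⟨?_, ?_, ?_, ?_, ?_, ?_⟩
         · rw [hYb t h1t']; exact a1
         · rw [hVb t h1t']; exact a2
         · rw [hVb t h1t']; exact a3
         · rw [hIfull t (by omega)]; exact a4
         · rw [hYb t h1t', ← hshift (t - 1) (by omega), hBseg (t - 1)]; exact a5
         · rw [← hshift t (by omega), hBseg t]; exact a6)
    | exact hIY0
    | (rw [hIfull t2 (by omega)]; exact hI2)
    | (rw [← hshift t2 (by omega), hBseg t2])

/-- with β = 0 and constant unit production cost, the optimal capital at
`t2` among plans with `I_{t1-1} = 0` and `I_{t2} = 0` decomposes as the maximal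
capital `𝔅1` reachable at `t1-1` (with zero inventory) plus the optimal increment of
a production segment on periods `t1..t2` started with capital `𝔅1`. -/
theorem stmt7 (T : ℕ) (hT : 1 ≤ T) (d p c h s : ℕ → ℝ) (c0 : ℝ)
    (hceq : ∀ t, c t = c0) (hc0 : 0 < c0)
    (hd : ∀ t, 0 ≤ d t) (hp : ∀ t, 0 ≤ p t) (hh : ∀ t, 0 ≤ h t) (hs : ∀ t, 0 ≤ s t)
    (B0 R : ℝ) (hB0 : 0 ≤ B0) (hR : 0 ≤ R)
    (TL : ℕ) (hTL1 : 1 ≤ TL) (hTL2 : TL ≤ T)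
    (t1 t2 : ℕ) (ht1 : 1 ≤ t1) (ht12 : t1 ≤ t2) (ht2 : t2 ≤ T)
    (𝔅1 : ℝ)
    (hatt : ∃ y v : ℕ → ℝ, FeasibleSeg 1 (t1 - 1) d p c h s R TL B0 y v ∧
      ISeq y v 1 (t1 - 1) = 0 ∧ BSeq p h s c R TL y v 1 B0 (t1 - 1) = 𝔅1)
    (hbound : ∀ y v : ℕ → ℝ, FeasibleSeg 1 (t1 - 1) d p c h s R TL B0 y v →
      ISeq y v 1 (t1 - 1) = 0 → BSeq p h s c R TL y v 1 B0 (t1 - 1) ≤ 𝔅1) :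
    sSup {x : EReal | ∃ y v : ℕ → ℝ,
        FeasibleSeg 1 t2 d p c h s R TL B0 y v ∧
        ISeq y v 1 (t1 - 1) = 0 ∧ ISeq y v 1 t2 = 0 ∧
        x = ((BSeq p h s c R TL y v 1 B0 t2 : ℝ) : EReal)}
      = (𝔅1 : EReal) +
        sSup {x : EReal | ∃ y v : ℕ → ℝ,
          FeasibleSeg t1 t2 d p c h s R TL 𝔅1 y v ∧ ISeq y v t1 t2 = 0 ∧
          x = ((BSeq p h s c R TL y v t1 𝔅1 t2 - 𝔅1 : ℝ) : EReal)} := by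
  obtain ⟨y1, v1, hf1, hI1, hB1⟩ := hatt
  set A : Set EReal := {x : EReal | ∃ y v : ℕ → ℝ,
      FeasibleSeg 1 t2 d p c h s R TL B0 y v ∧
      ISeq y v 1 (t1 - 1) = 0 ∧ ISeq y v 1 t2 = 0 ∧
      x = ((BSeq p h s c R TL y v 1 B0 t2 : ℝ) : EReal)} with hA
  set Bs : Set EReal := {x : EReal | ∃ y v : ℕ → ℝ,
      FeasibleSeg t1 t2 d p c h s R TL 𝔅1 y v ∧ ISeq y v t1 t2 = 0 ∧
      x = ((BSeq p h s c R TL y v t1 𝔅1 t2 - 𝔅1 : ℝ) : EReal)} with hBs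
  have hAB : ∀ x ∈ A, ∃ z ∈ Bs, x ≤ (𝔅1 : EReal) + z := by
    rintro x ⟨y, v, hf, hIa, hIb, rfl⟩
    have hpre : FeasibleSeg 1 (t1 - 1) d p c h s R TL B0 y v :=
      fun t a b => hf t a (by omega)
    set Bstar := BSeq p h s c R TL y v 1 B0 (t1 - 1) with hBstar
    have hble : Bstar ≤ 𝔅1 := hbound y v hpre hIa
    have hshift : ∀ t, t1 - 1 ≤ t →
        BSeq p h s c R TL y v t1 Bstar t = BSeq p h s c R TL y v 1 B0 t :=
      fun t ht => BSeq_shift p h s c R TL y v t1 ht1 B0 hIa t ht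
    have hIss : ∀ t, t1 - 1 ≤ t → ISeq y v t1 t = ISeq y v 1 t := by
      intro t ht
      rw [ISeq_split y v t1 t ht1 ht, hIa, zero_add]
    have hfseg : FeasibleSeg t1 t2 d p c h s R TL Bstar y v := by
      intro t h1t h2t
      obtain ⟨a1, a2, a3, a4, a5, a6⟩ := hf t (by omega) h2t
      refine ⟨a1, a2, a3, ?_, ?_, ?_⟩
      · rw [hIss t (by omega)]; exact a4
      · rw [hshift (t - 1) (by omega)]; exact a5
      · rw [hshift t (by omega)]; exact a6
    have hfseg' : FeasibleSeg t1 t2 d p c h s R TL 𝔅1 y v :=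
      FeasibleSeg_mono t1 t2 d p c h s R TL hble hfseg
    refine ⟨((BSeq p h s c R TL y v t1 𝔅1 t2 - 𝔅1 : ℝ) : EReal),
      ⟨y, v, hfseg', by rw [hIss t2 (by omega)]; exact hIb, rfl⟩, ?_⟩
    rw [← EReal.coe_add, EReal.coe_le_coe_iff]
    have hval : BSeq p h s c R TL y v t1 𝔅1 t2
        = BSeq p h s c R TL y v t1 Bstar t2 + (𝔅1 - Bstar) :=
      BSeq_add p h s c R TL y v t1 Bstar 𝔅1 t2
    rw [hval, hshift t2 (by omega)]
    linarith
  have hBA : ∀ z ∈ Bs, (𝔅1 : EReal) + z ∈ A := by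
    rintro z ⟨y2, v2, hf2, hI2, rfl⟩
    obtain ⟨Y, V, hfYV, hIY1, hIY2, hBeq⟩ :=
      concatPlan d p c h s R TL B0 𝔅1 t1 t2 ht1 ht12 y1 v1 hf1 hI1 hB1 y2 v2 hf2 hI2
    refine ⟨Y, V, hfYV, hIY1, hIY2, ?_⟩
    rw [← EReal.coe_add, hBeq]
    norm_num
  apply le_antisymm
  · apply sSup_le
    intro x hx
    obtain ⟨z, hz, hle⟩ := hAB x hx
    exact hle.trans (add_le_add_right (le_sSup hz) _)
  · have h1 : ∀ z ∈ Bs, z ≤ sSup A - (𝔅1 : EReal) := by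
      intro z hz
      rw [EReal.le_sub_iff_add_le (Or.inl (EReal.coe_ne_bot _)) (Or.inl (EReal.coe_ne_top _))]
      rw [add_comm]
      exact le_sSup (hBA z hz)
    have h2 : sSup Bs ≤ sSup A - (𝔅1 : EReal) := sSup_le h1
    calc (𝔅1 : EReal) + sSup Bs ≤ (𝔅1 : EReal) + (sSup A - (𝔅1 : EReal)) :=
          add_le_add_right h2 _
      _ = sSup A := by rw [add_comm]; exact EReal.sub_add_cancel
end

section
/- For every feasible plan (y, v) there exists a feasible plan (y′, v) with the same realized-sales sequence v, whose ending inventory satisfies I′_T = 0 and whose final capital satisfies B′_T ≥ B_T + ( min_{1 ≤ t ≤ T} c_t )·I_T. In particular, any feasible plan with I_T > 0 is strictly dominated by a feasible plan with zero ending inventory. -/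
lemma BSeq_zero (p h s c : ℕ → ℝ) (R : ℝ) (TL : ℕ) (y v : ℕ → ℝ) (B0 : ℝ) :
    BSeq p h s c R TL y v 1 B0 0 = B0 := rfl

lemma BSeq_succ (p h s c : ℕ → ℝ) (R : ℝ) (TL : ℕ) (y v : ℕ → ℝ) (B0 : ℝ) (t : ℕ) :
    BSeq p h s c R TL y v 1 B0 (t + 1)
      = BSeq p h s c R TL y v 1 B0 t + p (t + 1) * v (t + 1)
        - h (t + 1) * ISeq y v 1 (t + 1)
        - s (t + 1) * setupInd (y (t + 1))
        - c (t + 1) * y (t + 1)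
        - (if t + 1 = TL then R else 0) := by
  rw [BSeq, if_neg (by omega)]

lemma setupInd_mono {a b : ℝ} (hab : a ≤ b) : setupInd a ≤ setupInd b := by
  unfold setupInd
  split_ifs with h1 h2 h2 <;> norm_num <;> linarith

/-- every feasible plan is dominated by a feasible plan with the same
realized sales, zero ending inventory, and final capital at least
`B_T + (min_{1 ≤ t ≤ T} c_t) · I_T`; in particular a feasible plan with `I_T > 0`
is strictly dominated by a feasible plan with zero ending inventory. -/
theorem stmt9 (T : ℕ) (hT : 1 ≤ T) (d p c h s : ℕ → ℝ)
    (hc : ∀ t, 0 < c t)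
    (hd : ∀ t, 0 ≤ d t) (hp : ∀ t, 0 ≤ p t) (hh : ∀ t, 0 ≤ h t) (hs : ∀ t, 0 ≤ s t)
    (β : ℝ) (hβ0 : 0 ≤ β) (hβ1 : β ≤ 1)
    (B0 R : ℝ) (hB0 : 0 ≤ B0) (hR : 0 ≤ R)
    (TL : ℕ) (hTL1 : 1 ≤ TL) (hTL2 : TL ≤ T)
    (y v : ℕ → ℝ) (hfeas : Feasible T d p c h s β B0 R TL y v) :
    (∃ y' : ℕ → ℝ,
      Feasible T d p c h s β B0 R TL y' v ∧
      ISeq y' v 1 T = 0 ∧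
      BSeq p h s c R TL y v 1 B0 T
          + ((Finset.Icc 1 T).inf' (Finset.nonempty_Icc.2 hT) c) * ISeq y v 1 T
        ≤ BSeq p h s c R TL y' v 1 B0 T) ∧
    (0 < ISeq y v 1 T →
      ∃ y' : ℕ → ℝ,
        Feasible T d p c h s β B0 R TL y' v ∧
        ISeq y' v 1 T = 0 ∧
        BSeq p h s c R TL y v 1 B0 T < BSeq p h s c R TL y' v 1 B0 T) := by
  classical
  set E := ISeq y v 1 T with hE
  set cmin := (Finset.Icc 1 T).inf' (Finset.nonempty_Icc.2 hT) c with hcmin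
  have hcmin_pos : 0 < cmin := by
    rw [hcmin]
    exact (Finset.lt_inf'_iff _).mpr fun i _ => hc i
  have hE_nonneg : 0 ≤ E := (hfeas T hT le_rfl).2.2.2.1
  set Cf : ℕ → ℝ := fun j => max 0 (E - ∑ i ∈ Finset.Icc (j + 1) T, y i) with hCf
  set y' : ℕ → ℝ := fun t => y t - (Cf t - Cf (t - 1)) with hy'
  have hCf_nonneg : ∀ j, 0 ≤ Cf j := fun j => le_max_left _ _
  -- splitting of Icc sums
  have hsplit : ∀ (t : ℕ), t ≤ T → ∀ f : ℕ → ℝ,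
      ∑ i ∈ Finset.Icc 1 T, f i
        = ∑ i ∈ Finset.Icc 1 t, f i + ∑ i ∈ Finset.Icc (t + 1) T, f i := by
    intro t ht f
    rw [← Finset.sum_union]
    · congr 1
      ext i
      simp only [Finset.mem_union, Finset.mem_Icc]
      omega
    · rw [Finset.disjoint_left]
      intro i hi hi'
      simp only [Finset.mem_Icc] at hi hi'
      omega
  -- step bounds for Cf
  have hstep : ∀ t, 1 ≤ t → t ≤ T →
      Cf (t - 1) ≤ Cf t ∧ Cf t - Cf (t - 1) ≤ y t := by
    intro t h1 h2
    have hyt : 0 ≤ y t := (hfeas t h1 h2).1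
    obtain ⟨t', rfl⟩ : ∃ t', t = t' + 1 := ⟨t - 1, by omega⟩
    have hsub : (t' + 1) - 1 = t' := by omega
    have hIcc : Finset.Icc (t' + 1) T = insert (t' + 1) (Finset.Icc (t' + 2) T) := by
      ext i
      simp only [Finset.mem_Icc, Finset.mem_insert]
      omega
    have hnot : t' + 1 ∉ Finset.Icc (t' + 2) T := by simp [Finset.mem_Icc]
    have hsum : ∑ i ∈ Finset.Icc (t' + 1) T, y i
        = y (t' + 1) + ∑ i ∈ Finset.Icc (t' + 2) T, y i := by
      rw [hIcc, Finset.sum_insert hnot]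
    have hCft : Cf (t' + 1) = max 0 (E - ∑ i ∈ Finset.Icc (t' + 2) T, y i) := by
      simp only [hCf]
    have hCft' : Cf ((t' + 1) - 1) = max 0 (E - ∑ i ∈ Finset.Icc (t' + 1) T, y i) := by
      simp only [hCf, hsub]
    rw [hCft, hCft', hsum]
    constructor
    · exact max_le_max le_rfl (by linarith)
    · have h1 := le_max_left (0:ℝ) (E - (y (t' + 1) + ∑ i ∈ Finset.Icc (t' + 2) T, y i))
      have h2 := le_max_right (0:ℝ) (E - (y (t' + 1) + ∑ i ∈ Finset.Icc (t' + 2) T, y i))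
      have : E - ∑ i ∈ Finset.Icc (t' + 2) T, y i
          ≤ max 0 (E - (y (t' + 1) + ∑ i ∈ Finset.Icc (t' + 2) T, y i)) + y (t' + 1) := by
        linarith
      have h3 : (0:ℝ) ≤ max 0 (E - (y (t' + 1) + ∑ i ∈ Finset.Icc (t' + 2) T, y i)) + y (t' + 1) := by
        linarith
      have := max_le h3 this
      linarith
  -- Cf 0 = 0
  have hCf0 : Cf 0 = 0 := by
    have hv_sum : 0 ≤ ∑ i ∈ Finset.Icc 1 T, v i :=
      Finset.sum_nonneg fun i hi => by
        rw [Finset.mem_Icc] at hi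
        exact (hfeas i hi.1 hi.2).2.1
    have hEle : E ≤ ∑ i ∈ Finset.Icc 1 T, y i := by
      rw [hE]
      unfold ISeq
      rw [Finset.sum_sub_distrib]
      linarith
    simp only [hCf, zero_add]
    exact max_eq_left (by linarith)
  -- Cf T = E
  have hCfT : Cf T = E := by
    have : Finset.Icc (T + 1) T = ∅ := by
      rw [Finset.Icc_eq_empty]
      omega
    simp only [hCf, this, Finset.sum_empty, sub_zero]
    exact max_eq_right hE_nonneg
  -- telescoping
  have htel : ∀ t, ∑ j ∈ Finset.Icc 1 t, (Cf j - Cf (j - 1)) = Cf t - Cf 0 := by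
    intro t
    induction t with
    | zero => simp
    | succ n ih =>
      rw [Finset.sum_Icc_succ_top (by omega : 1 ≤ n + 1), ih]
      have : (n + 1) - 1 = n := by omega
      rw [this]
      ring
  -- ISeq of y'
  have hI' : ∀ t, ISeq y' v 1 t = ISeq y v 1 t - Cf t := by
    intro t
    unfold ISeq
    have : ∀ j, y' j - v j = (y j - v j) - (Cf j - Cf (j - 1)) := by
      intro j; simp only [hy']; ring
    simp_rw [this]
    rw [Finset.sum_sub_distrib, htel, hCf0]
    ring
  -- Cf t ≤ I_t
  have hIge : ∀ t, 1 ≤ t → t ≤ T → Cf t ≤ ISeq y v 1 t := by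
    intro t h1 h2
    have hIt : 0 ≤ ISeq y v 1 t := (hfeas t h1 h2).2.2.2.1
    have hsplitI := hsplit t h2 (fun i => y i - v i)
    have hsplity := hsplit t h2 y
    have hvtail : 0 ≤ ∑ i ∈ Finset.Icc (t + 1) T, v i :=
      Finset.sum_nonneg fun i hi => by
        rw [Finset.mem_Icc] at hi
        exact (hfeas i (by omega) hi.2).2.1
    have htail : ∑ i ∈ Finset.Icc (t + 1) T, (y i - v i)
        ≤ ∑ i ∈ Finset.Icc (t + 1) T, y i := by
      rw [Finset.sum_sub_distrib]
      linarith
    have hEeq : E = ISeq y v 1 t + ∑ i ∈ Finset.Icc (t + 1) T, (y i - v i) := by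
      rw [hE]; unfold ISeq; exact hsplitI
    simp only [hCf]
    apply max_le hIt
    linarith
  -- y' bounds
  have hy'_le : ∀ t, 1 ≤ t → t ≤ T → y' t ≤ y t := by
    intro t h1 h2
    simp only [hy']
    have := (hstep t h1 h2).1
    linarith
  have hy'_nn : ∀ t, 1 ≤ t → t ≤ T → 0 ≤ y' t := by
    intro t h1 h2
    simp only [hy']
    have := (hstep t h1 h2).2
    linarith
  -- capital comparison
  have hB' : ∀ t, t ≤ T →
      BSeq p h s c R TL y v 1 B0 t + cmin * Cf t ≤ BSeq p h s c R TL y' v 1 B0 t := by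
    intro t
    induction t with
    | zero => intro _; rw [BSeq_zero, BSeq_zero, hCf0]; simp
    | succ n ih =>
      intro hn
      have ihn := ih (by omega)
      rw [BSeq_succ, BSeq_succ]
      have hIle : ISeq y' v 1 (n + 1) ≤ ISeq y v 1 (n + 1) := by
        rw [hI']
        have := hCf_nonneg (n + 1)
        linarith
      have hhle : h (n + 1) * ISeq y' v 1 (n + 1) ≤ h (n + 1) * ISeq y v 1 (n + 1) :=
        mul_le_mul_of_nonneg_left hIle (hh (n + 1))
      have hsle : s (n + 1) * setupInd (y' (n + 1)) ≤ s (n + 1) * setupInd (y (n + 1)) :=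
        mul_le_mul_of_nonneg_left (setupInd_mono (hy'_le (n + 1) (by omega) hn)) (hs (n + 1))
      have hdelta_nn : 0 ≤ Cf (n + 1) - Cf n := by
        have := (hstep (n + 1) (by omega) hn).1
        have hsub : (n + 1) - 1 = n := by omega
        rw [hsub] at this
        linarith
      have hcminle : cmin ≤ c (n + 1) := by
        rw [hcmin]
        exact Finset.inf'_le c (Finset.mem_Icc.mpr ⟨by omega, hn⟩)
      have hcy : c (n + 1) * y' (n + 1)
          ≤ c (n + 1) * y (n + 1) - cmin * (Cf (n + 1) - Cf n) := by
        have hy'eq : y' (n + 1) = y (n + 1) - (Cf (n + 1) - Cf n) := by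
          simp only [hy']
          have hsub : (n + 1) - 1 = n := by omega
          rw [hsub]
        rw [hy'eq]
        have : cmin * (Cf (n + 1) - Cf n) ≤ c (n + 1) * (Cf (n + 1) - Cf n) :=
          mul_le_mul_of_nonneg_right hcminle hdelta_nn
        linarith [this]
      have : cmin * Cf (n + 1) = cmin * Cf n + cmin * (Cf (n + 1) - Cf n) := by ring
      linarith
  -- feasibility of y'
  have hfeas' : Feasible T d p c h s β B0 R TL y' v := by
    intro t h1 h2
    obtain ⟨hy0, hv0, hvEd, hI0, hbud, hB0t⟩ := hfeas t h1 h2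
    refine ⟨hy'_nn t h1 h2, hv0, hvEd, ?_, ?_, ?_⟩
    · rw [hI']
      have := hIge t h1 h2
      linarith
    · have h3 : s t * setupInd (y' t) + c t * y' t ≤ s t * setupInd (y t) + c t * y t := by
        have h4 : s t * setupInd (y' t) ≤ s t * setupInd (y t) :=
          mul_le_mul_of_nonneg_left (setupInd_mono (hy'_le t h1 h2)) (hs t)
        have h5 : c t * y' t ≤ c t * y t :=
          mul_le_mul_of_nonneg_left (hy'_le t h1 h2) (le_of_lt (hc t))
        linarith
      have h6 := hB' (t - 1) (by omega)
      have h7 : 0 ≤ cmin * Cf (t - 1) :=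
        mul_nonneg (le_of_lt hcmin_pos) (hCf_nonneg (t - 1))
      linarith
    · have h6 := hB' t h2
      have h7 : 0 ≤ cmin * Cf t := mul_nonneg (le_of_lt hcmin_pos) (hCf_nonneg t)
      linarith
  have hIT' : ISeq y' v 1 T = 0 := by
    rw [hI', hCfT, ← hE]
    ring
  have hBT : BSeq p h s c R TL y v 1 B0 T + cmin * E ≤ BSeq p h s c R TL y' v 1 B0 T := by
    have := hB' T le_rfl
    rw [hCfT] at this
    exact this
  constructor
  · exact ⟨y', hfeas', hIT', hBT⟩
  · intro hE_pos
    refine ⟨y', hfeas', hIT', ?_⟩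
    have : 0 < cmin * E := mul_pos hcmin_pos hE_pos
    linarith
end
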